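/- The like relation of the graph of any medium is transitive; hence the graph of a medium is mediatic. -/

import Mathlib

variable {S : Type*}

/-- Result of applying message `m` (a list of tokens) to state `P`. -/
def mApply (m : List (S → S)) (P : S) : S := m.foldl (fun s τ => τ s) P

/-- `τ'` is a reverse of `τ`. -/
def IsReverse (τ τ' : S → S) : Prop := ∀ P Q : S, P ≠ Q → (τ P = Q ↔ τ' Q = P)

/-- `(S, T)` is a token system. -/
def IsTokenSystem (T : Set (S → S)) : Prop :=
  Nontrivial S ∧ T.Nonempty ∧ ∀ τ ∈ T, τ ≠ id

/-- `m` is a message of the token system with token set `T`. -/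
def IsMsg (T : Set (S → S)) (m : List (S → S)) : Prop := ∀ τ ∈ m, τ ∈ T

/-- `m` is stepwise effective for `P`. -/
def StepwiseEff : List (S → S) → S → Prop
  | [], _ => True
  | τ :: rest, P => τ P ≠ P ∧ StepwiseEff rest (τ P)

/-- `m` is consistent: it contains no token together with a reverse of it. -/
def Consistent (m : List (S → S)) : Prop :=
  ∀ τ ∈ m, ∀ τ' ∈ m, ¬ IsReverse τ τ'

/-- `m` is concise for `P`. -/
def Concise (T : Set (S → S)) (m : List (S → S)) (P : S) : Prop :=
  IsMsg T m ∧ Consistent m ∧ StepwiseEff m P ∧ m.Nodup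

/-- `m` is a return message for `P`. -/
def IsReturn (m : List (S → S)) (P : S) : Prop :=
  StepwiseEff m P ∧ mApply m P = P

/-- `m` is vacuous: its indices partition into pairs of mutually reverse tokens. -/
def Vacuous (m : List (S → S)) : Prop :=
  ∃ σ : Equiv.Perm (Fin m.length),
    (∀ i, σ i ≠ i) ∧ (∀ i, σ (σ i) = i) ∧
    ∀ i, IsReverse (m.get i) (m.get (σ i))

/-- `(S, T)` is a medium: token system satisfying [Ma] and [Mb]. -/
def IsMedium (T : Set (S → S)) : Prop :=
  IsTokenSystem T ∧
  (∀ P Q : S, P ≠ Q → ∃ m, Concise T m P ∧ mApply m P = Q) ∧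
  (∀ (m : List (S → S)) (P : S), IsMsg T m → IsReturn m P → Vacuous m)

/-- Content of a message: its set of tokens. -/
def msgContent (m : List (S → S)) : Set (S → S) := {τ | τ ∈ m}

/-- Token content of a state `P`. -/
def SContent (T : Set (S → S)) (P : S) : Set (S → S) :=
  {τ | ∃ (V : S) (m : List (S → S)), Concise T m V ∧ mApply m V = P ∧ τ ∈ m}

/-- `mr` is the reverse message `τ̃ₙ…τ̃₁` of `m = τ₁…τₙ`. -/
def IsReverseOfMsg (m mr : List (S → S)) : Prop :=
  List.Forall₂ (fun τ τ' => IsReverse τ τ' ∧ IsReverse τ' τ) m mr.reverse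

/-- The graph of a medium: states are vertices, token-adjacent states are joined. -/
def mediumGraph (T : Set (S → S)) : SimpleGraph S where
  Adj P Q := P ≠ Q ∧ ∃ τ ∈ T, τ P = Q ∨ τ Q = P
  symm := by
    constructor
    rintro P Q ⟨h, τ, hτ, hor⟩
    exact ⟨h.symm, τ, hτ, hor.symm⟩
  loopless := by
    constructor
    rintro P ⟨h, -⟩
    exact h rfl

variable {V : Type*}

/-- The like relation on arcs of a graph:
`ab L cd` iff `d(a,c) + 1 = d(b,d) + 1 = d(a,d) = d(b,c)`. -/
def Like (G : SimpleGraph V) (a b c d : V) : Prop :=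
  G.Adj a b ∧ G.Adj c d ∧
    G.dist a c + 1 = G.dist b d + 1 ∧ G.dist b d + 1 = G.dist a d ∧
    G.dist a d = G.dist b c

/-- A graph is mediatic if it is connected, bipartite, and its like relation is transitive. -/
def IsMediatic (G : SimpleGraph V) : Prop :=
  G.Connected ∧ G.Colorable 2 ∧
    ∀ a b c d e f : V, Like G a b c d → Like G c d e f → Like G a b e f


/-!
Each token `α` of a medium orients every pair of states: `crossing T α P Q`, the number of
occurrences of `α` minus those of its reverse in a message producing `Q` from `P`, does not depend
on the message because [Mb] makes every return message vacuous. It is additive along routes, lies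
in `{-1, 0, 1}`, and concise messages are geodesics, so `d(P, Q)` counts the tokens `α` with
`crossing T α P Q = 1`. Comparing these counts across an edge `u → α u` gives
`d(x, α u) = d(x, u) + 2 · crossing T α x u + 1`. This makes the graph bipartite and shows that
whenever `ab L cd`, every token producing `b` from `a` produces `d` from `c`, while conversely
`a (τ a) L e (τ e)` for every token `τ` moving both `a` and `e`; transitivity of `L` follows.
-/

open Classical

section Reverse

variable {τ ρ ρ' : S → S}

/-- The reverse of `τ`, or `τ` itself if it has none. -/
noncomputable def rev (τ : S → S) : S → S :=
  if h : ∃ ρ, IsReverse τ ρ then h.choose else τ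

theorem IsReverse.symm (h : IsReverse τ ρ) : IsReverse ρ τ :=
  fun P Q hPQ => (h Q P hPQ.symm).symm

theorem IsReverse.unique (h : IsReverse τ ρ) (h' : IsReverse τ ρ') : ρ = ρ' := by
  funext P
  by_cases hP : ρ' P = P
  · by_cases hP' : ρ P = P
    · rw [hP, hP']
    · exact ((h' _ P hP').1 ((h _ P hP').2 rfl)).symm
  · exact (h _ P hP).1 ((h' _ P hP).2 rfl)

theorem IsReverse.rev_eq (h : IsReverse τ ρ) : rev τ = ρ := by
  have hex : ∃ ρ, IsReverse τ ρ := ⟨ρ, h⟩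
  rw [rev, dif_pos hex]
  exact hex.choose_spec.unique h

theorem rev_rev (τ : S → S) : rev (rev τ) = τ := by
  by_cases h : ∃ ρ, IsReverse τ ρ
  · obtain ⟨ρ, hρ⟩ := h
    rw [hρ.rev_eq, hρ.symm.rev_eq]
  · have h' : rev τ = τ := by rw [rev, dif_neg h]
    rw [h', h']

theorem rev_injective : Function.Injective (rev (S := S)) :=
  Function.LeftInverse.injective rev_rev

end Reverse

section Messages

variable {T : Set (S → S)} {τ α : S → S} {m n : List (S → S)} {P Q R : S}

@[simp] theorem mApply_nil : mApply [] P = P := rfl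

@[simp] theorem mApply_cons : mApply (τ :: m) P = mApply m (τ P) := rfl

@[simp] theorem mApply_append : mApply (m ++ n) P = mApply n (mApply m P) := by
  simp [mApply, List.foldl_append]

theorem stepwiseEff_append :
    StepwiseEff (m ++ n) P ↔ StepwiseEff m P ∧ StepwiseEff n (mApply m P) := by
  induction m generalizing P with
  | nil => simp [StepwiseEff]
  | cons τ m ih => simp only [List.cons_append, StepwiseEff, ih, mApply_cons, and_assoc]

theorem isMsg_append : IsMsg T (m ++ n) ↔ IsMsg T m ∧ IsMsg T n := by
  simp only [IsMsg, List.mem_append, or_imp, forall_and]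

theorem isMsg_cons : IsMsg T (τ :: m) ↔ τ ∈ T ∧ IsMsg T m := by
  simp [IsMsg]

def Produces (T : Set (S → S)) (m : List (S → S)) (P Q : S) : Prop :=
  IsMsg T m ∧ StepwiseEff m P ∧ mApply m P = Q

theorem produces_nil : Produces T [] P P := ⟨by simp [IsMsg], trivial, rfl⟩

theorem produces_cons :
    Produces T (τ :: m) P Q ↔ τ ∈ T ∧ τ P ≠ P ∧ Produces T m (τ P) Q := by
  simp only [Produces, isMsg_cons, StepwiseEff, mApply_cons]
  tauto

theorem produces_singleton (hτ : τ ∈ T) (hP : τ P ≠ P) : Produces T [τ] P (τ P) :=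
  produces_cons.2 ⟨hτ, hP, produces_nil⟩

theorem Produces.append (hm : Produces T m P Q) (hn : Produces T n Q R) :
    Produces T (m ++ n) P R :=
  ⟨isMsg_append.2 ⟨hm.1, hn.1⟩, stepwiseEff_append.2 ⟨hm.2.1, hm.2.2 ▸ hn.2.1⟩,
    by rw [mApply_append, hm.2.2, hn.2.2]⟩

theorem Concise.produces (hc : Concise T m P) (hQ : mApply m P = Q) : Produces T m P Q :=
  ⟨hc.1, hc.2.2.1, hQ⟩

noncomputable def netCount (m : List (S → S)) (α : S → S) : ℤ :=
  m.count α - m.count (rev α)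

theorem netCount_append : netCount (m ++ n) α = netCount m α + netCount n α := by
  simp only [netCount, List.count_append]
  push_cast
  ring

theorem netCount_rev : netCount m (rev α) = -netCount m α := by
  simp only [netCount, rev_rev]
  ring

theorem netCount_singleton :
    netCount [τ] α = (if α = τ then 1 else 0) - if rev α = τ then 1 else 0 := by
  simp only [netCount, List.count_singleton, beq_iff_eq, eq_comm (a := τ)]
  split_ifs <;> rfl

theorem neg_one_le_netCount (hm : m.Nodup) : -1 ≤ netCount m α := by
  have := List.nodup_iff_count_le_one.1 hm (rev α)
  simp only [netCount]
  omega

theorem netCount_le_one (hm : m.Nodup) : netCount m α ≤ 1 := by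
  have := List.nodup_iff_count_le_one.1 hm α
  simp only [netCount]
  omega

end Messages

namespace Vacuous

variable {W m n : List (S → S)} {τ : S → S}

theorem exists_isReverse (hW : Vacuous W) (hτ : τ ∈ W) : ∃ ρ ∈ W, IsReverse τ ρ := by
  obtain ⟨σ, -, -, hσ⟩ := hW
  obtain ⟨i, rfl⟩ := List.get_of_mem hτ
  exact ⟨_, List.get_mem _ _, hσ i⟩

theorem isReverse_rev (hW : Vacuous W) (hτ : τ ∈ W) : IsReverse τ (rev τ) := by
  obtain ⟨ρ, -, hρ⟩ := hW.exists_isReverse hτ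
  rwa [hρ.rev_eq]

theorem rev_mem (hW : Vacuous W) (hτ : τ ∈ W) : rev τ ∈ W := by
  obtain ⟨ρ, hρW, hρ⟩ := hW.exists_isReverse hτ
  rwa [hρ.rev_eq]

theorem map_rev_perm (hW : Vacuous W) : (W.map rev).Perm W := by
  obtain ⟨σ, -, -, hσ⟩ := hW
  have h : rev ∘ W.get = W.get ∘ σ := funext fun i => (hσ i).rev_eq
  have := σ.ofFn_comp_perm W.get
  rwa [← h, ← List.map_ofFn, List.ofFn_get] at this

theorem netCount_eq_zero (hW : Vacuous W) (α : S → S) : netCount W α = 0 := by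
  rw [netCount, ← List.count_map_of_injective W rev rev_injective α,
    hW.map_rev_perm.count_eq, sub_self]

theorem length_le_of_append (hW : Vacuous (m ++ n)) (hc : Consistent m) (hd : m.Nodup) :
    m.length ≤ n.length := by
  have hsub : m.map rev ⊆ n := by
    intro ρ hρ
    obtain ⟨τ, hτ, rfl⟩ := List.mem_map.1 hρ
    have hτW : τ ∈ m ++ n := List.mem_append_left n hτ
    exact (List.mem_append.1 (hW.rev_mem hτW)).resolve_left
      fun h => hc τ hτ _ h (hW.isReverse_rev hτW)
  simpa using ((hd.map rev_injective).subperm hsub).length_le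

end Vacuous

theorem mediumGraph_adj_apply {T : Set (S → S)} {τ : S → S} {P : S} (hτ : τ ∈ T)
    (hP : τ P ≠ P) : (mediumGraph T).Adj P (τ P) :=
  ⟨hP.symm, τ, hτ, Or.inl rfl⟩

theorem Produces.exists_walk {T : Set (S → S)} {m : List (S → S)} {P Q : S}
    (h : Produces T m P Q) : ∃ w : (mediumGraph T).Walk P Q, w.length = m.length := by
  induction m generalizing P with
  | nil =>
    obtain ⟨-, -, rfl⟩ := h
    exact ⟨.nil, rfl⟩
  | cons τ m ih =>
    obtain ⟨hτ, hP, hm⟩ := produces_cons.1 h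
    obtain ⟨w, hw⟩ := ih hm
    exact ⟨.cons (mediumGraph_adj_apply hτ hP) w, by simp [hw]⟩

noncomputable def conciseMsg (T : Set (S → S)) (P Q : S) : List (S → S) :=
  if h : ∃ m, Concise T m P ∧ mApply m P = Q then h.choose else []

noncomputable def crossing (T : Set (S → S)) (α : S → S) (P Q : S) : ℤ :=
  netCount (conciseMsg T P Q) α

theorem crossing_rev {T : Set (S → S)} (α : S → S) (P Q : S) :
    crossing T (rev α) P Q = -crossing T α P Q :=
  netCount_rev

namespace IsMedium

variable {T : Set (S → S)} {τ α : S → S} {m : List (S → S)} {P Q u x : S}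

theorem exists_apply_ne (hM : IsMedium T) (hτ : τ ∈ T) : ∃ P, τ P ≠ P :=
  not_forall.1 fun h => hM.1.2.2 τ hτ (funext h)

theorem vacuous (hM : IsMedium T) (h : Produces T m P P) : Vacuous m :=
  hM.2.2 m P h.1 ⟨h.2.1, h.2.2⟩

theorem exists_isReverse (hM : IsMedium T) (hτ : τ ∈ T) : ∃ ρ ∈ T, IsReverse τ ρ := by
  obtain ⟨P, hP⟩ := hM.exists_apply_ne hτ
  obtain ⟨m, hm, hmP⟩ := hM.2.1 (τ P) P hP
  have hret : Produces T (τ :: m) P P := produces_cons.2 ⟨hτ, hP, hm.produces hmP⟩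
  obtain ⟨ρ, hρ, hrev⟩ := (hM.vacuous hret).exists_isReverse List.mem_cons_self
  exact ⟨ρ, hret.1 ρ hρ, hrev⟩

theorem isReverse_rev (hM : IsMedium T) (hτ : τ ∈ T) : IsReverse τ (rev τ) := by
  obtain ⟨ρ, -, h⟩ := hM.exists_isReverse hτ
  rwa [h.rev_eq]

theorem rev_mem (hM : IsMedium T) (hτ : τ ∈ T) : rev τ ∈ T := by
  obtain ⟨ρ, hρ, h⟩ := hM.exists_isReverse hτ
  rwa [h.rev_eq]

theorem rev_apply_apply (hM : IsMedium T) (hτ : τ ∈ T) (hP : τ P ≠ P) : rev τ (τ P) = P :=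
  (hM.isReverse_rev hτ P (τ P) hP.symm).1 rfl

theorem exists_concise (hM : IsMedium T) (P Q : S) : ∃ m, Concise T m P ∧ mApply m P = Q := by
  rcases eq_or_ne P Q with rfl | h
  · exact ⟨[], by simp [Concise, IsMsg, Consistent, StepwiseEff], rfl⟩
  · exact hM.2.1 P Q h

theorem conciseMsg_spec (hM : IsMedium T) (P Q : S) :
    Concise T (conciseMsg T P Q) P ∧ mApply (conciseMsg T P Q) P = Q := by
  rw [conciseMsg, dif_pos (hM.exists_concise P Q)]
  exact (hM.exists_concise P Q).choose_spec

theorem produces_conciseMsg (hM : IsMedium T) (P Q : S) : Produces T (conciseMsg T P Q) P Q :=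
  (hM.conciseMsg_spec P Q).1.produces (hM.conciseMsg_spec P Q).2

theorem exists_apply_eq_of_adj (hM : IsMedium T) (h : (mediumGraph T).Adj P Q) :
    ∃ τ ∈ T, τ P = Q := by
  obtain ⟨hPQ, τ, hτ, hτPQ | hτQP⟩ := h
  · exact ⟨τ, hτ, hτPQ⟩
  · exact ⟨rev τ, hM.rev_mem hτ, (hM.isReverse_rev hτ Q P hPQ.symm).1 hτQP⟩

theorem exists_produces_of_walk (hM : IsMedium T) (w : (mediumGraph T).Walk P Q) :
    ∃ m, Produces T m P Q ∧ m.length = w.length := by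
  induction w with
  | nil => exact ⟨[], produces_nil, rfl⟩
  | cons hadj _ ih =>
    obtain ⟨m, hm, hlen⟩ := ih
    obtain ⟨τ, hτ, rfl⟩ := hM.exists_apply_eq_of_adj hadj
    exact ⟨τ :: m, produces_cons.2 ⟨hτ, hadj.ne.symm, hm⟩, by simp [hlen]⟩

theorem connected (hM : IsMedium T) : (mediumGraph T).Connected := by
  have : Nonempty S := hM.1.1.to_nonempty
  refine ⟨fun P Q => ?_⟩
  obtain ⟨w, -⟩ := (hM.produces_conciseMsg P Q).exists_walk
  exact w.reachable

theorem length_eq_dist (hM : IsMedium T) (hc : Concise T m P) :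
    m.length = (mediumGraph T).dist P (mApply m P) := by
  obtain ⟨w, hw⟩ := (hc.produces rfl).exists_walk
  obtain ⟨p, hp⟩ := (hM.connected.preconnected (mApply m P) P).exists_walk_length_eq_dist
  obtain ⟨n, hn, hlen⟩ := hM.exists_produces_of_walk p
  have hle := (hM.vacuous ((hc.produces rfl).append hn)).length_le_of_append hc.2.1 hc.2.2.2
  have hge := SimpleGraph.dist_le w
  rw [SimpleGraph.dist_comm] at hp
  omega

/-- A self-reverse `τ` would close a concise message from `x` to `τ x` into a return message in
which every token of the consistent part must pair with the final `τ`. -/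
theorem rev_ne (hM : IsMedium T) (hτ : τ ∈ T) : rev τ ≠ τ := by
  intro hrev
  have hττ : IsReverse τ τ := by
    have := hM.isReverse_rev hτ
    rwa [hrev] at this
  obtain ⟨x, hx⟩ := hM.exists_apply_ne hτ
  obtain ⟨m, hm, hmx⟩ := hM.2.1 x (τ x) hx.symm
  have hback : τ (τ x) = x := (hττ x (τ x) hx.symm).1 rfl
  have hlast : Produces T [τ] (τ x) x := by
    have := produces_singleton hτ (P := τ x) (by rw [hback]; exact hx.symm)
    rwa [hback] at this
  have hret := (hm.produces hmx).append hlast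
  obtain ⟨μ, hμ⟩ := List.exists_mem_of_ne_nil m (by rintro rfl; exact hx hmx.symm)
  obtain ⟨ρ, hρ, hμρ⟩ := (hM.vacuous hret).exists_isReverse (List.mem_append_left _ hμ)
  rcases List.mem_append.1 hρ with hρm | hρτ
  · exact hm.2.1 μ hμ ρ hρm hμρ
  · rw [List.mem_singleton.1 hρτ] at hμρ
    have hμτ : μ = τ := hμρ.symm.rev_eq.symm.trans hrev
    rw [hμτ] at hμ
    exact hm.2.1 τ hμ τ hμ hττ

theorem netCount_eq_one_iff (hM : IsMedium T) (hc : Concise T m P) :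
    netCount m α = 1 ↔ α ∈ m := by
  have hle := List.nodup_iff_count_le_one.1 hc.2.2.2 α
  constructor
  · intro h
    rw [← List.count_pos_iff]
    simp only [netCount] at h
    omega
  · intro h
    have hrev : rev α ∉ m := fun h' => hc.2.1 α h _ h' (hM.isReverse_rev (hc.1 α h))
    rw [netCount, List.count_eq_zero.2 hrev, List.count_eq_one_of_mem hc.2.2.2 h]
    rfl

theorem crossing_add_add_eq_zero (hM : IsMedium T) (α : S → S) (P Q R : S) :
    crossing T α P Q + crossing T α Q R + crossing T α R P = 0 := by
  have hret := ((hM.produces_conciseMsg P Q).append (hM.produces_conciseMsg Q R)).append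
    (hM.produces_conciseMsg R P)
  simpa only [crossing, netCount_append] using (hM.vacuous hret).netCount_eq_zero α

theorem crossing_self (hM : IsMedium T) (α : S → S) (P : S) : crossing T α P P = 0 := by
  have := hM.crossing_add_add_eq_zero α P P P
  omega

theorem crossing_swap (hM : IsMedium T) (α : S → S) (P Q : S) :
    crossing T α Q P = -crossing T α P Q := by
  have := hM.crossing_add_add_eq_zero α P Q P
  rw [hM.crossing_self] at this
  omega

theorem crossing_add (hM : IsMedium T) (α : S → S) (P Q R : S) :
    crossing T α P R = crossing T α P Q + crossing T α Q R := by
  have := hM.crossing_add_add_eq_zero α P Q R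
  rw [hM.crossing_swap α P R] at this
  omega

theorem crossing_eq_netCount (hM : IsMedium T) (h : Produces T m P Q) (α : S → S) :
    crossing T α P Q = netCount m α := by
  have := (hM.vacuous (h.append (hM.produces_conciseMsg Q P))).netCount_eq_zero α
  rw [netCount_append, ← crossing, hM.crossing_swap] at this
  omega

theorem neg_one_le_crossing (hM : IsMedium T) (α : S → S) (P Q : S) : -1 ≤ crossing T α P Q :=
  neg_one_le_netCount (hM.conciseMsg_spec P Q).1.2.2.2

theorem crossing_le_one (hM : IsMedium T) (α : S → S) (P Q : S) : crossing T α P Q ≤ 1 :=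
  netCount_le_one (hM.conciseMsg_spec P Q).1.2.2.2

theorem crossing_eq_one_iff (hM : IsMedium T) : crossing T α P Q = 1 ↔ α ∈ conciseMsg T P Q :=
  hM.netCount_eq_one_iff (hM.conciseMsg_spec P Q).1

theorem dist_eq_card (hM : IsMedium T) (P Q : S) :
    (mediumGraph T).dist P Q = (conciseMsg T P Q).toFinset.card := by
  obtain ⟨hc, hQ⟩ := hM.conciseMsg_spec P Q
  rw [List.toFinset_card_of_nodup hc.2.2.2, hM.length_eq_dist hc, hQ]

theorem crossing_apply (hM : IsMedium T) (hτ : τ ∈ T) (hu : τ u ≠ u) (α : S → S) :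
    crossing T α u (τ u) = (if α = τ then 1 else 0) - if rev α = τ then 1 else 0 := by
  rw [hM.crossing_eq_netCount (produces_singleton hτ hu), netCount_singleton]

theorem crossing_apply_self (hM : IsMedium T) (hτ : τ ∈ T) (hu : τ u ≠ u) :
    crossing T τ u (τ u) = 1 := by
  simp [hM.crossing_apply hτ hu, hM.rev_ne hτ]

theorem crossing_apply_right (hM : IsMedium T) (hτ : τ ∈ T) (hu : τ u ≠ u) (x : S) :
    crossing T τ x (τ u) = crossing T τ x u + 1 := by
  rw [hM.crossing_add τ x u, hM.crossing_apply_self hτ hu]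

theorem crossing_apply_left (hM : IsMedium T) (hτ : τ ∈ T) (hu : τ u ≠ u) (x : S) :
    crossing T τ (τ u) x = crossing T τ u x - 1 := by
  rw [hM.crossing_add τ (τ u) u, hM.crossing_swap τ u, hM.crossing_apply_self hτ hu]
  ring

theorem eq_of_crossing_apply_eq_one (hM : IsMedium T) (hτ : τ ∈ T) (hu : τ u ≠ u)
    (h : crossing T α u (τ u) = 1) : α = τ := by
  rw [hM.crossing_apply hτ hu] at h
  split_ifs at h with hα <;> omega

theorem crossing_apply_of_ne (hM : IsMedium T) (hτ : τ ∈ T) (hu : τ u ≠ u) (h₁ : α ≠ τ)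
    (h₂ : α ≠ rev τ) : crossing T α u (τ u) = 0 := by
  have h₂' : rev α ≠ τ := fun h => h₂ (by rw [← h, rev_rev])
  simp [hM.crossing_apply hτ hu, h₁, h₂']

theorem dist_apply_of_crossing_eq_zero (hM : IsMedium T) (hα : α ∈ T) (hu : α u ≠ u)
    (hx : crossing T α x u = 0) :
    (mediumGraph T).dist x (α u) = (mediumGraph T).dist x u + 1 := by
  have hα_not : α ∉ (conciseMsg T x u).toFinset := by
    simp [← hM.crossing_eq_one_iff, hx]
  have hset : (conciseMsg T x (α u)).toFinset = insert α (conciseMsg T x u).toFinset := by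
    ext μ
    simp only [List.mem_toFinset, Finset.mem_insert, ← hM.crossing_eq_one_iff,
      hM.crossing_add μ x u (α u)]
    by_cases hμ : μ = α
    · simp [hμ, hx, hM.crossing_apply_self hα hu]
    by_cases hμ' : μ = rev α
    · simp [hμ', crossing_rev, hx, hM.crossing_apply_self hα hu, hM.rev_ne hα]
    · simp [hM.crossing_apply_of_ne hα hu hμ hμ', hμ]
  rw [hM.dist_eq_card, hM.dist_eq_card, hset, Finset.card_insert_of_notMem hα_not]

theorem dist_apply (hM : IsMedium T) (hα : α ∈ T) (hu : α u ≠ u) (x : S) :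
    ((mediumGraph T).dist x (α u) : ℤ) =
      (mediumGraph T).dist x u + 2 * crossing T α x u + 1 := by
  have hup := hM.crossing_le_one α x (α u)
  rw [hM.crossing_apply_right hα hu] at hup
  rcases (show crossing T α x u = 0 ∨ crossing T α x u = -1 by
    have := hM.neg_one_le_crossing α x u; omega) with h | h
  · rw [hM.dist_apply_of_crossing_eq_zero hα hu h, h]
    push_cast
    ring
  · have hback := hM.rev_apply_apply hα hu
    have h₀ : crossing T (rev α) x (α u) = 0 := by
      rw [crossing_rev, hM.crossing_apply_right hα hu, h]
      ring
    have := hM.dist_apply_of_crossing_eq_zero (hM.rev_mem hα) (by rw [hback]; exact hu.symm) h₀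
    rw [hback] at this
    rw [this, h]
    push_cast
    ring

theorem colorable_two (hM : IsMedium T) : (mediumGraph T).Colorable 2 := by
  obtain ⟨O⟩ : Nonempty S := hM.1.1.to_nonempty
  refine ⟨.mk (fun P => ⟨(mediumGraph T).dist O P % 2, Nat.mod_lt _ two_pos⟩) fun hPQ hcol => ?_⟩
  obtain ⟨α, hα, rfl⟩ := hM.exists_apply_eq_of_adj hPQ
  have := hM.dist_apply hα hPQ.ne.symm O
  have := Fin.mk.inj hcol
  omega

theorem apply_eq_of_like (hM : IsMedium T) {a b c d : S} (hL : Like (mediumGraph T) a b c d)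
    (hτ : τ ∈ T) (hab : τ a = b) : τ c = d := by
  obtain ⟨hab', hcd, h₁, h₂, h₃⟩ := hL
  obtain ⟨μ, hμ, rfl⟩ := hM.exists_apply_eq_of_adj hcd
  have hc : μ c ≠ c := hcd.ne.symm
  have hac : crossing T μ a c = 0 := by
    have := hM.dist_apply hμ hc a
    omega
  have hbc : crossing T μ b c = -1 := by
    have := hM.dist_apply hμ hc b
    omega
  have hone : crossing T μ a (τ a) = 1 := by
    rw [hab, hM.crossing_add μ a c b, hM.crossing_swap μ b c, hac, hbc]
    rfl
  rw [hM.eq_of_crossing_apply_eq_one hτ (hab ▸ hab'.ne.symm) hone]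

theorem like_apply (hM : IsMedium T) (hτ : τ ∈ T) {a e : S} (ha : τ a ≠ a) (he : τ e ≠ e) :
    Like (mediumGraph T) a (τ a) e (τ e) := by
  have hae : crossing T τ a e = 0 := by
    have hle := hM.crossing_le_one τ a (τ e)
    have hge := hM.neg_one_le_crossing τ (τ a) e
    rw [hM.crossing_apply_right hτ he] at hle
    rw [hM.crossing_apply_left hτ ha] at hge
    omega
  have h₁ := hM.dist_apply hτ he a
  have h₂ := hM.dist_apply hτ he (τ a)
  have h₃ := hM.dist_apply hτ ha e
  rw [hM.crossing_apply_left hτ ha, hae] at h₂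
  rw [hM.crossing_swap τ a e, hae, SimpleGraph.dist_comm (u := e),
    SimpleGraph.dist_comm (u := e)] at h₃
  rw [hae] at h₁
  exact ⟨mediumGraph_adj_apply hτ ha, mediumGraph_adj_apply hτ he, by omega, by omega, by omega⟩

theorem like_trans (hM : IsMedium T) (a b c d e f : S) (h₁ : Like (mediumGraph T) a b c d)
    (h₂ : Like (mediumGraph T) c d e f) : Like (mediumGraph T) a b e f := by
  obtain ⟨τ, hτ, rfl⟩ := hM.exists_apply_eq_of_adj h₁.1
  have hef := hM.apply_eq_of_like h₂ hτ (hM.apply_eq_of_like h₁ hτ rfl)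
  subst hef
  exact hM.like_apply hτ h₁.1.ne.symm h₂.2.1.ne.symm

end IsMedium

/-- The like relation of the graph of a medium is transitive;
hence the graph of a medium is mediatic. -/
theorem stmt15 {T : Set (S → S)} (hM : IsMedium T) :
    (∀ a b c d e f : S, Like (mediumGraph T) a b c d → Like (mediumGraph T) c d e f →
      Like (mediumGraph T) a b e f) ∧
    IsMediatic (mediumGraph T) :=
  ⟨hM.like_trans, hM.connected, hM.colorable_two, hM.like_trans⟩
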